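/- Let K = (R_{0:n-1}, K_{0:n-1}) be a knotset compatible with a Feynman–Kac model M, and let M* = K ∗ M. Then for every measurable φ: (1) γ*_n(φ) = γ_n(φ) and γ̂*_n(φ) = γ̂_n(φ); (2) η*_n(φ) = η_n(φ) and η̂*_n(φ) = η̂_n(φ); (3) γ*_p(1) = γ_p(1) and γ̂*_p(1) = γ̂_p(1) for all p ∈ {0,…,n}, where the starred quantities are the corresponding measures of M*. -/

import Mathlib

open MeasureTheory
open scoped ENNReal

noncomputable section

namespace KnotsPaper

variable {α β γ : Type*}

/-- Composition of measure-valued maps ("kernels"): `(L K)(x,·) = ∫ L(x,dy) K(y,·)`. -/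
def kcomp [MeasurableSpace β] [MeasurableSpace γ]
    (L : α → Measure β) (K : β → Measure γ) : α → Measure γ :=
  fun x => (L x).bind K

/-- A kernel applied to a nonnegative function: `K(H)(x) = ∫ H(y) K(x,dy)`. -/
def kap [MeasurableSpace β] (K : α → Measure β) (H : β → ℝ≥0∞) : α → ℝ≥0∞ :=
  fun x => ∫⁻ y, H y ∂(K x)

/-- Twisted kernel `K^H`: `K^H(x,dy) = K(x,dy)H(y)/K(H)(x)` when `K(H)(x) > 0`,
and `K(x,·)` when `K(H)(x) = 0`. -/
def twist [MeasurableSpace β] (K : α → Measure β) (H : β → ℝ≥0∞) : α → Measure β :=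
  fun x => if kap K H x = 0 then K x else (kap K H x)⁻¹ • (K x).withDensity H

/-- Markov kernel property for a measure-valued map. -/
def IsKernel [MeasurableSpace α] [MeasurableSpace β] (K : α → Measure β) : Prop :=
  Measurable K ∧ ∀ x, IsProbabilityMeasure (K x)

/-- Conditional variance `Var_K(f)(x) = K(f²)(x) − (K(f)(x))²` (real-valued). -/
def varK [MeasurableSpace β] (K : α → Measure β) (f : β → ℝ) : α → ℝ :=
  fun x => (∫ y, (f y) ^ 2 ∂(K x)) - (∫ y, f y ∂(K x)) ^ 2

/-- Conditional variance `Var_K(f)(x) = K(f²)(x) − (K(f)(x))²` in `ℝ≥0∞`. -/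
def varK' [MeasurableSpace β] (K : α → Measure β) (f : β → ℝ) : α → ℝ≥0∞ :=
  fun x => (∫⁻ y, ENNReal.ofReal ((f y) ^ 2) ∂(K x)) - ENNReal.ofReal ((∫ y, f y ∂(K x)) ^ 2)

/-- Conditional covariance `Cov_K(f,g)(x) = K(f·g)(x) − K(f)(x)·K(g)(x)`. -/
def covK [MeasurableSpace β] (K : α → Measure β) (f g : β → ℝ) : α → ℝ :=
  fun x => (∫ y, f y * g y ∂(K x)) - (∫ y, f y ∂(K x)) * (∫ y, g y ∂(K x))

/-- Tensor product of kernels: `(U ⊗ W)(x, d[y,z]) = U(x,dy) W(y,dz)`. -/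
def ktens [MeasurableSpace β] [MeasurableSpace γ]
    (U : α → Measure β) (W : β → Measure γ) : α → Measure (β × γ) :=
  fun x => (U x).bind (fun y => (W y).map (fun z => (y, z)))

variable {E : Type*} [MeasurableSpace E]

/-- A discrete-time (updated) Feynman--Kac model with horizon `n`:
an initial distribution `init`, Markov kernels `M p` (used for `p ∈ [1,n]`)
and potential functions `G p` (used for `p ∈ [0,n]`). -/
structure FK (E : Type*) [MeasurableSpace E] (n : ℕ) where
  init : Measure E
  M : ℕ → E → Measure E
  G : ℕ → E → ℝ≥0∞

namespace FK

variable {n : ℕ}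

/-- Regularity of a Feynman--Kac model: the initial distribution is a probability
measure, the `M p` are Markov kernels, and the potentials `G p` are measurable,
`[0,∞)`-valued and integrable with respect to `M p (x, ·)` for all `x` (resp. `init`). -/
def Reg (𝓜 : FK E n) : Prop :=
  IsProbabilityMeasure 𝓜.init ∧
  (∀ p, 1 ≤ p → p ≤ n → IsKernel (𝓜.M p)) ∧
  (∀ p, p ≤ n → Measurable (𝓜.G p)) ∧
  (∀ p x, 𝓜.G p x ≠ ∞) ∧
  (∫⁻ x, 𝓜.G 0 x ∂𝓜.init) ≠ ∞ ∧
  (∀ p x, 1 ≤ p → p ≤ n → kap (𝓜.M p) (𝓜.G p) x ≠ ∞)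

/-- Predictive measures `γ_p`. -/
def gamma (𝓜 : FK E n) : ℕ → Measure E
  | 0 => 𝓜.init
  | p + 1 => ((gamma 𝓜 p).withDensity (𝓜.G p)).bind (𝓜.M (p + 1))

/-- Updated measures `γ̂_p`. -/
def gammaHat (𝓜 : FK E n) (p : ℕ) : Measure E := (𝓜.gamma p).withDensity (𝓜.G p)

/-- Normalised predictive measures `η_p`. -/
def eta (𝓜 : FK E n) (p : ℕ) : Measure E := ((𝓜.gamma p) Set.univ)⁻¹ • 𝓜.gamma p

/-- Normalised updated measures `η̂_p`. -/
def etaHat (𝓜 : FK E n) (p : ℕ) : Measure E := ((𝓜.gammaHat p) Set.univ)⁻¹ • 𝓜.gammaHat p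

/-- The kernels `Q_{p,n}`: `Q_{n,n} = Id` and `Q_{p,n} = Q_{p+1} Q_{p+1,n}` where
`Q_{p+1}(x,dy) = G_p(x) M_{p+1}(x,dy)`. -/
def Qto (𝓜 : FK E n) (p : ℕ) : E → Measure E :=
  if _h : n ≤ p then fun x => Measure.dirac x
  else fun x => ((𝓜.G p x) • (𝓜.M (p + 1) x)).bind (Qto 𝓜 (p + 1))
termination_by n - p
decreasing_by omega

/-- `Q_{p,n}(φ)`. -/
def Qf (𝓜 : FK E n) (p : ℕ) (φ : E → ℝ) : E → ℝ := fun x => ∫ y, φ y ∂(𝓜.Qto p x)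

/-- The asymptotic variance terms
`v_{p,n}(φ) = γ_p(1) γ_p(Q_{p,n}(φ)²)/γ_n(1)² − η_n(φ)²` (valued in `[0,∞]`). -/
def v (𝓜 : FK E n) (p : ℕ) (φ : E → ℝ) : ℝ≥0∞ :=
  𝓜.gamma p Set.univ * (∫⁻ x, ENNReal.ofReal ((𝓜.Qf p φ x) ^ 2) ∂(𝓜.gamma p))
      / (𝓜.gamma n Set.univ) ^ 2
    - ENNReal.ofReal ((∫ x, φ x ∂(𝓜.eta n)) ^ 2)

/-- The (predictive) asymptotic variance map `σ²(φ) = Σ_{p=0}^n v_{p,n}(φ)`. -/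
def var (𝓜 : FK E n) (φ : E → ℝ) : ℝ≥0∞ := ∑ p ∈ Finset.range (n + 1), 𝓜.v p φ

/-- The updated asymptotic variance terms `v̂_{p,n}(φ) = v_{p,n}(G_n·φ)/η_n(G_n)²`. -/
def vhat (𝓜 : FK E n) (p : ℕ) (φ : E → ℝ) : ℝ≥0∞ :=
  𝓜.v p (fun x => (𝓜.G n x).toReal * φ x)
    / ENNReal.ofReal ((∫ x, (𝓜.G n x).toReal ∂(𝓜.eta n)) ^ 2)

/-- The updated asymptotic variance map `σ̂²(φ)`. -/
def varHat (𝓜 : FK E n) (φ : E → ℝ) : ℝ≥0∞ := ∑ p ∈ Finset.range (n + 1), 𝓜.vhat p φ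

/-- The class `F(M)` of relevant test functions for the predictive measure. -/
def memF (𝓜 : FK E n) (φ : E → ℝ) : Prop := Integrable φ (𝓜.eta n) ∧ 𝓜.var φ ≠ ∞

/-- The class `F̂(M)` of relevant test functions for the updated measure. -/
def memFhat (𝓜 : FK E n) (φ : E → ℝ) : Prop := Integrable φ (𝓜.etaHat n) ∧ 𝓜.varHat φ ≠ ∞

end FK

/-- Application of a single knot `(t,R,K)` with `1 ≤ t < n` to a model:
`M*_t = R`, `G*_t = K(G_t)`, `M*_{t+1} = K^{G_t} M_{t+1}`, everything else unchanged. -/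
def knotApply {n : ℕ} (t : ℕ) (R K : E → Measure E) (𝓜 : FK E n) : FK E n where
  init := 𝓜.init
  M := fun p =>
    if p = t then R
    else if p = t + 1 then kcomp (twist K (𝓜.G t)) (𝓜.M (t + 1))
    else 𝓜.M p
  G := fun p => if p = t then kap K (𝓜.G t) else 𝓜.G p

/-- Application of a knot `(0,R₀,K)` at time `0` (where `R₀` is a probability measure):
`M*_0 = R₀`, `G*_0 = K(G_0)`, `M*_1 = K^{G_0} M_1`, everything else unchanged. -/
def knotApply0 {n : ℕ} (R0 : Measure E) (K : E → Measure E) (𝓜 : FK E n) : FK E n where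
  init := R0
  M := fun p => if p = 1 then kcomp (twist K (𝓜.G 0)) (𝓜.M 1) else 𝓜.M p
  G := fun p => if p = 0 then kap K (𝓜.G 0) else 𝓜.G p

/-- A knotset `(R_{0:n-1}, K_{0:n-1})`: `n` knots `(p, R_p, K_p)`, `p ∈ [0,n-1]`,
where `R_0` is a probability measure (recorded in `R0`). -/
structure Knotset (E : Type*) [MeasurableSpace E] (n : ℕ) where
  R0 : Measure E
  R : ℕ → E → Measure E
  K : ℕ → E → Measure E

namespace Knotset

variable {n : ℕ}

/-- Regularity of a knotset: its constituents are (probability) Markov kernels. -/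
def Reg (𝓚 : Knotset E n) : Prop :=
  IsProbabilityMeasure 𝓚.R0 ∧
  (∀ p, 1 ≤ p → p < n → IsKernel (𝓚.R p)) ∧
  (∀ p, p < n → IsKernel (𝓚.K p))

/-- Compatibility of a knotset with a model: `R_p K_p = M_p` for every `p ∈ [0,n-1]`. -/
def Compat (𝓚 : Knotset E n) (𝓜 : FK E n) : Prop :=
  𝓚.R0.bind (𝓚.K 0) = 𝓜.init ∧
  ∀ p, 1 ≤ p → p < n → kcomp (𝓚.R p) (𝓚.K p) = 𝓜.M p

/-- The knot-model `K ∗ M` in closed form: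
`M*_0 = R_0`, `G*_0 = K_0(G_0)`, `M*_p = K_{p-1}^{G_{p-1}} R_p`, `G*_p = K_p(G_p)` for
`p ∈ [1,n-1]`, `M*_n = K_{n-1}^{G_{n-1}} M_n` and `G*_n = G_n`. -/
def apply (𝓚 : Knotset E n) (𝓜 : FK E n) : FK E n where
  init := 𝓚.R0
  M := fun p =>
    if p = 0 then 𝓜.M 0
    else if p < n then kcomp (twist (𝓚.K (p - 1)) (𝓜.G (p - 1))) (𝓚.R p)
    else if p = n then kcomp (twist (𝓚.K (n - 1)) (𝓜.G (n - 1))) (𝓜.M n)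
    else 𝓜.M p
  G := fun p => if p < n then kap (𝓚.K p) (𝓜.G p) else 𝓜.G p

/-- The sequential application `K_t ∗ K_{t+1} ∗ ⋯ ∗ K_{n-1} ∗ M` of the knots of a
knotset at times `t, t+1, ..., n-1` (in descending time order), for `1 ≤ t`. -/
def applyFrom (𝓚 : Knotset E n) (𝓜 : FK E n) (t : ℕ) : FK E n :=
  if _h : t < n then knotApply t (𝓚.R t) (𝓚.K t) (applyFrom 𝓚 𝓜 (t + 1))
  else 𝓜
termination_by n - t
decreasing_by omega

/-- The knotset operator defined as the sequential application
`K ∗ M = K_0 ∗ K_1 ∗ ⋯ ∗ K_{n-1} ∗ M` of its knots in descending time order. -/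
def seqApply (𝓚 : Knotset E n) (𝓜 : FK E n) : FK E n :=
  knotApply0 𝓚.R0 (𝓚.K 0) (𝓚.applyFrom 𝓜 1)

end Knotset

/-- One application of a compatible knotset. -/
def KnotStep {n : ℕ} (𝓜' 𝓜 : FK E n) : Prop :=
  ∃ 𝓚 : Knotset E n, 𝓚.Reg ∧ 𝓚.Compat 𝓜 ∧ 𝓜' = 𝓚.apply 𝓜

/-- The partial order on Feynman--Kac models induced by knotsets:
`M* ≼ M` iff `M* = K_m ∗ ⋯ ∗ K_1 ∗ M` for some finite sequence of compatible knotsets. -/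
def KnotOrder {n : ℕ} (𝓜' 𝓜 : FK E n) : Prop :=
  Relation.TransGen KnotStep 𝓜' 𝓜

/-- The adapted knotset for a model `M`: the knot at time `p ≥ 1` is `(p, Id, M_p)`
and the knot at time `0` is `(0, δ_{x₀}, K_0)` with `K_0(x₀,·) = M_0`. -/
def IsAdaptedKnotset {n : ℕ} (𝓚 : Knotset E n) (𝓜 : FK E n) : Prop :=
  (∃ x₀ : E, 𝓚.R0 = Measure.dirac x₀ ∧ 𝓚.K 0 x₀ = 𝓜.init) ∧
  (∀ p, 1 ≤ p → p < n →
    𝓚.R p = (fun x => Measure.dirac x) ∧ 𝓚.K p = 𝓜.M p)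

/-- A Feynman--Kac model with horizon `n ≥ 1` whose terminal state space is the
product `E × E` (as arises from a `φ`-extension): terminal Markov kernel `Mn` and
terminal potential `Gn` are defined on the product space. -/
structure FKx (E : Type*) [MeasurableSpace E] (n : ℕ) where
  init : Measure E
  M : ℕ → E → Measure E
  Mn : E → Measure (E × E)
  G : ℕ → E → ℝ≥0∞
  Gn : E × E → ℝ≥0∞

namespace FKx

variable {n : ℕ}

/-- Predictive measures `γ_p` for `p ≤ n-1`. -/
def gamma (𝓝 : FKx E n) : ℕ → Measure E
  | 0 => 𝓝.init
  | p + 1 => ((gamma 𝓝 p).withDensity (𝓝.G p)).bind (𝓝.M (p + 1))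

/-- Updated measures `γ̂_p` for `p ≤ n-1`. -/
def gammaHat (𝓝 : FKx E n) (p : ℕ) : Measure E := (𝓝.gamma p).withDensity (𝓝.G p)

/-- Normalised predictive measures `η_p` for `p ≤ n-1`. -/
def eta (𝓝 : FKx E n) (p : ℕ) : Measure E := ((𝓝.gamma p) Set.univ)⁻¹ • 𝓝.gamma p

/-- Normalised updated measures `η̂_p` for `p ≤ n-1`. -/
def etaHat (𝓝 : FKx E n) (p : ℕ) : Measure E := ((𝓝.gammaHat p) Set.univ)⁻¹ • 𝓝.gammaHat p

/-- Terminal predictive measure `γ_n` (on the product space). -/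
def gammaN (𝓝 : FKx E n) : Measure (E × E) := (𝓝.gammaHat (n - 1)).bind 𝓝.Mn

/-- Terminal updated measure `γ̂_n`. -/
def gammaHatN (𝓝 : FKx E n) : Measure (E × E) := 𝓝.gammaN.withDensity 𝓝.Gn

/-- Terminal normalised predictive measure `η_n`. -/
def etaN (𝓝 : FKx E n) : Measure (E × E) := (𝓝.gammaN Set.univ)⁻¹ • 𝓝.gammaN

/-- Terminal normalised updated measure `η̂_n`. -/
def etaHatN (𝓝 : FKx E n) : Measure (E × E) := (𝓝.gammaHatN Set.univ)⁻¹ • 𝓝.gammaHatN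

/-- Kernels `Q_{p,n}` (into the terminal product space), for `p ≤ n-1`. -/
def Qto (𝓝 : FKx E n) (p : ℕ) : E → Measure (E × E) :=
  if _h : n - 1 ≤ p then fun x => (𝓝.G (n - 1) x) • (𝓝.Mn x)
  else fun x => ((𝓝.G p x) • (𝓝.M (p + 1) x)).bind (Qto 𝓝 (p + 1))
termination_by n - 1 - p
decreasing_by omega

/-- `Q_{p,n}(φ)` for `p ≤ n-1`. -/
def Qf (𝓝 : FKx E n) (p : ℕ) (φ : E × E → ℝ) : E → ℝ := fun x => ∫ z, φ z ∂(𝓝.Qto p x)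

/-- Asymptotic variance terms `v_{p,n}(φ)` (with `Q_{n,n} = Id`). -/
def v (𝓝 : FKx E n) (p : ℕ) (φ : E × E → ℝ) : ℝ≥0∞ :=
  if p = n then
    𝓝.gammaN Set.univ * (∫⁻ z, ENNReal.ofReal ((φ z) ^ 2) ∂𝓝.gammaN)
        / (𝓝.gammaN Set.univ) ^ 2
      - ENNReal.ofReal ((∫ z, φ z ∂𝓝.etaN) ^ 2)
  else
    𝓝.gamma p Set.univ * (∫⁻ x, ENNReal.ofReal ((𝓝.Qf p φ x) ^ 2) ∂(𝓝.gamma p))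
        / (𝓝.gammaN Set.univ) ^ 2
      - ENNReal.ofReal ((∫ z, φ z ∂𝓝.etaN) ^ 2)

/-- Updated asymptotic variance terms `v̂_{p,n}(φ) = v_{p,n}(G_n·φ)/η_n(G_n)²`. -/
def vhat (𝓝 : FKx E n) (p : ℕ) (φ : E × E → ℝ) : ℝ≥0∞ :=
  𝓝.v p (fun z => (𝓝.Gn z).toReal * φ z)
    / ENNReal.ofReal ((∫ z, (𝓝.Gn z).toReal ∂𝓝.etaN) ^ 2)

/-- Updated asymptotic variance map `σ̂²(φ)`. -/
def varHat (𝓝 : FKx E n) (φ : E × E → ℝ) : ℝ≥0∞ := ∑ p ∈ Finset.range (n + 1), 𝓝.vhat p φ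

/-- The class `F̂` of relevant test functions for the updated terminal measure. -/
def memFhat (𝓝 : FKx E n) (φ : E × E → ℝ) : Prop :=
  Integrable φ 𝓝.etaHatN ∧ 𝓝.varHat φ ≠ ∞

end FKx

/-- The `φ`-extended model `M^φ` of a model `M`: the terminal kernel becomes
`M_n ⊗ Id` and the terminal potential becomes `(G_n·φ) ⊗ φ^{-1}`. -/
def FK.ext {n : ℕ} (𝓜 : FK E n) (φ : E → ℝ) : FKx E n where
  init := 𝓜.init
  M := 𝓜.M
  Mn := fun x => (𝓜.M n x).map (fun y => (y, y))
  G := 𝓜.G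
  Gn := fun z => 𝓜.G n z.1 * ENNReal.ofReal (φ z.1) * (ENNReal.ofReal (φ z.2))⁻¹

/-- Application of a standard knot `(t,R,K)`, `1 ≤ t < n`, to an extended model. -/
def knotApplyX {n : ℕ} (t : ℕ) (R K : E → Measure E) (𝓝 : FKx E n) : FKx E n where
  init := 𝓝.init
  M := fun p =>
    if p = t then R
    else if p = t + 1 then kcomp (twist K (𝓝.G t)) (𝓝.M (t + 1))
    else 𝓝.M p
  Mn := if t + 1 = n then kcomp (twist K (𝓝.G t)) 𝓝.Mn else 𝓝.Mn
  G := fun p => if p = t then kap K (𝓝.G t) else 𝓝.G p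
  Gn := 𝓝.Gn

/-- Application of a standard knot `(0,R₀,K)` at time `0` to an extended model. -/
def knotApplyX0 {n : ℕ} (R0 : Measure E) (K : E → Measure E) (𝓝 : FKx E n) : FKx E n where
  init := R0
  M := fun p => if p = 1 then kcomp (twist K (𝓝.G 0)) (𝓝.M 1) else 𝓝.M p
  Mn := if n = 1 then kcomp (twist K (𝓝.G 0)) 𝓝.Mn else 𝓝.Mn
  G := fun p => if p = 0 then kap K (𝓝.G 0) else 𝓝.G p
  Gn := 𝓝.Gn

/-- Application of a terminal knot `(n,R,K)` to an extended model, written with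
respect to the decomposition `M_n = P_1 ⊗ P_2`, `G_n = H ⊗ φ^{-1}` (with `P_1 = RK`):
`M*_n = R ⊗ K^H P_2` and `G*_n = K(H) ⊗ φ^{-1}`, all other components unchanged. -/
def termKnotApply {n : ℕ} (R K P2 : E → Measure E) (H : E → ℝ≥0∞) (φ : E → ℝ)
    (𝓝 : FKx E n) : FKx E n where
  init := 𝓝.init
  M := 𝓝.M
  Mn := ktens R (kcomp (twist K H) P2)
  G := 𝓝.G
  Gn := fun z => kap K H z.1 * (ENNReal.ofReal (φ z.2))⁻¹

/-- Terminal-knot model-compatibility of an extended model w.r.t. a reference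
terminal potential `Gref` and target function `φ`: `M_n = U ⊗ V^{G_n·φ}` and
`G_n = V(G_n·φ) ⊗ φ^{-1}` for some Markov kernels `U`, `V`. -/
def TermCompatible {n : ℕ} (𝓝 : FKx E n) (Gref : E → ℝ≥0∞) (φ : E → ℝ) : Prop :=
  ∃ U V : E → Measure E, IsKernel U ∧ IsKernel V ∧
    𝓝.Mn = ktens U (twist V (fun y => Gref y * ENNReal.ofReal (φ y))) ∧
    𝓝.Gn = fun z =>
      kap V (fun y => Gref y * ENNReal.ofReal (φ y)) z.1 * (ENNReal.ofReal (φ z.2))⁻¹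

/-- One application of a (standard or terminal) knot to an extended model, relative to
a reference terminal potential `Gref` and target function `φ`. -/
def XStep {n : ℕ} (Gref : E → ℝ≥0∞) (φ : E → ℝ) (𝓝' 𝓝 : FKx E n) : Prop :=
  (∃ (R0 : Measure E) (K : E → Measure E), IsProbabilityMeasure R0 ∧ IsKernel K ∧
      R0.bind K = 𝓝.init ∧ 𝓝' = knotApplyX0 R0 K 𝓝) ∨
  (∃ (t : ℕ) (R K : E → Measure E), 1 ≤ t ∧ t < n ∧ IsKernel R ∧ IsKernel K ∧
      kcomp R K = 𝓝.M t ∧ 𝓝' = knotApplyX t R K 𝓝) ∨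
  (∃ R K U V : E → Measure E, IsKernel R ∧ IsKernel K ∧ IsKernel U ∧ IsKernel V ∧
      𝓝.Mn = ktens U (twist V (fun y => Gref y * ENNReal.ofReal (φ y))) ∧
      𝓝.Gn = (fun z =>
        kap V (fun y => Gref y * ENNReal.ofReal (φ y)) z.1 * (ENNReal.ofReal (φ z.2))⁻¹) ∧
      kcomp R K = U ∧
      𝓝' = termKnotApply R K (twist V (fun y => Gref y * ENNReal.ofReal (φ y)))
              (kap V (fun y => Gref y * ENNReal.ofReal (φ y))) φ 𝓝)

/-- A finite (nonempty) sequence of (standard or terminal) knot applications. -/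
def XChain {n : ℕ} (Gref : E → ℝ≥0∞) (φ : E → ℝ) : FKx E n → FKx E n → Prop :=
  Relation.TransGen (XStep Gref φ)

/-- The partial order `M* ≼_φ M°` with respect to a reference model `M`:
`M*` is obtained from `M°` by knots, and `M°` is obtained from `M^φ` by knots. -/
def XOrder {n : ℕ} (𝓜 : FK E n) (φ : E → ℝ) (𝓝' 𝓝 : FKx E n) : Prop :=
  XChain (𝓜.G n) φ 𝓝' 𝓝 ∧ XChain (𝓜.G n) φ 𝓝 (𝓜.ext φ)

end KnotsPaper

namespace KnotsPaper

/-! The twisted kernel satisfies `(μ · K(H)) K^H = (μ K) · H` wherever `K(H) < ∞`. With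
`μ = γ*_p`, `K = K_p`, `H = G_p` this turns `γ̂*_p M*_{p+1} = (γ*_p · K_p(G_p)) K_p^{G_p} R_{p+1}`
into `(γ*_p K_p · G_p) R_{p+1}`, so compatibility `R_{p+1} K_{p+1} = M_{p+1}` propagates the
invariant `γ*_p K_p = γ_p` from `p` to `p + 1`. The finiteness of `K_p(G_p)` needed along the way
holds `γ*_p`-a.e. because `R_p(K_p(G_p)) = M_p(G_p) < ∞`. At the last step `M_n` replaces `R_n`,
which gives `γ*_n = γ_n`; for `p < n` the total masses agree since `K_p` is Markov and
`γ*_p(K_p(G_p)) = (γ*_p K_p)(G_p)`. -/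

lemma kap_mul_twist_apply {α β : Type*} [MeasurableSpace β] {K : α → Measure β}
    {H : β → ℝ≥0∞} {x : α} (hx : kap K H x ≠ ∞) (s : Set β) :
    kap K H x * twist K H x s = (K x).withDensity H s := by
  by_cases h0 : kap K H x = 0
  · have hmass : (K x).withDensity H Set.univ = 0 := by
      rwa [withDensity_apply _ MeasurableSet.univ, Measure.restrict_univ]
    rw [h0, zero_mul, measure_mono_null (Set.subset_univ s) hmass]
  · rw [twist, if_neg h0, Measure.smul_apply, smul_eq_mul, ← mul_assoc,
      ENNReal.mul_inv_cancel h0 hx, one_mul]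

section Kernels

variable {α β : Type*} [MeasurableSpace α] [MeasurableSpace β]

lemma measurable_kap {K : α → Measure β} {H : β → ℝ≥0∞} (hK : Measurable K)
    (hH : Measurable H) : Measurable (kap K H) :=
  (Measure.measurable_lintegral hH).comp hK

lemma lintegral_kap (μ : Measure α) {K : α → Measure β} {H : β → ℝ≥0∞} (hK : Measurable K)
    (hH : Measurable H) : ∫⁻ x, kap K H x ∂μ = ∫⁻ y, H y ∂(μ.bind K) :=
  (Measure.lintegral_bind hK.aemeasurable hH.aemeasurable).symm

lemma measurable_withDensity_kernel {K : α → Measure β} {H : β → ℝ≥0∞} (hK : Measurable K)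
    (hH : Measurable H) : Measurable fun x => (K x).withDensity H := by
  refine Measure.measurable_of_measurable_coe _ fun s hs => ?_
  simp only [withDensity_apply _ hs, ← lintegral_indicator hs]
  exact (Measure.measurable_lintegral (hH.indicator hs)).comp hK

lemma measurable_twist {K : α → Measure β} {H : β → ℝ≥0∞} (hK : Measurable K)
    (hH : Measurable H) : Measurable (twist K H) := by
  refine Measurable.ite (measurableSet_eq_fun (measurable_kap hK hH) measurable_const) hK ?_
  refine Measure.measurable_of_measurable_coe _ fun s hs => ?_
  simp only [Measure.smul_apply, smul_eq_mul]
  exact (measurable_kap hK hH).inv.mul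
    ((Measure.measurable_coe hs).comp (measurable_withDensity_kernel hK hH))

lemma bind_withDensity_kernel (μ : Measure α) {K : α → Measure β} {H : β → ℝ≥0∞}
    (hK : Measurable K) (hH : Measurable H) :
    μ.bind (fun x => (K x).withDensity H) = (μ.bind K).withDensity H := by
  ext s hs
  rw [Measure.bind_apply hs (measurable_withDensity_kernel hK hH).aemeasurable,
    withDensity_apply _ hs, ← lintegral_indicator hs, ← lintegral_kap μ hK (hH.indicator hs)]
  simp only [kap, withDensity_apply _ hs, lintegral_indicator hs]

lemma withDensity_kap_bind_twist (μ : Measure α) {K : α → Measure β} {H : β → ℝ≥0∞}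
    (hK : Measurable K) (hH : Measurable H) (hfin : ∀ᵐ x ∂μ, kap K H x ≠ ∞) :
    (μ.withDensity (kap K H)).bind (twist K H) = (μ.bind K).withDensity H := by
  rw [← bind_withDensity_kernel μ hK hH]
  ext s hs
  rw [Measure.bind_apply hs (measurable_twist hK hH).aemeasurable,
    Measure.bind_apply hs (measurable_withDensity_kernel hK hH).aemeasurable,
    lintegral_withDensity_eq_lintegral_mul μ (measurable_kap hK hH)
      (show Measurable fun x => twist K H x s from
        (Measure.measurable_coe hs).comp (measurable_twist hK hH))]
  exact lintegral_congr_ae (hfin.mono fun x hx => kap_mul_twist_apply hx s)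

lemma bind_apply_univ (μ : Measure α) {K : α → Measure β}
    (hK : Measurable K) [∀ x, IsProbabilityMeasure (K x)] : μ.bind K Set.univ = μ Set.univ := by
  simp [Measure.bind_apply MeasurableSet.univ hK.aemeasurable]

lemma ae_bind_of_forall_ae {μ : Measure α} {K : α → Measure β} (hK : AEMeasurable K μ)
    {p : β → Prop} (hp : MeasurableSet {y | p y}) (h : ∀ x, ∀ᵐ y ∂(K x), p y) :
    ∀ᵐ y ∂(μ.bind K), p y := by
  change μ.bind K {y | p y}ᶜ = 0
  rw [Measure.bind_apply hp.compl hK]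
  exact (lintegral_congr fun x => ae_iff.mp (h x)).trans lintegral_zero

end Kernels

section KnotModel

variable {E : Type*} [MeasurableSpace E] {n : ℕ}

lemma FK.gammaHat_univ (𝓜 : FK E n) (p : ℕ) :
    𝓜.gammaHat p Set.univ = ∫⁻ x, 𝓜.G p x ∂(𝓜.gamma p) := by
  rw [FK.gammaHat, withDensity_apply _ MeasurableSet.univ, Measure.restrict_univ]

lemma FK.gamma_succ_of_twist (𝓜 : FK E n) {q : ℕ} {K T : E → Measure E} {H : E → ℝ≥0∞}
    (hK : Measurable K) (hH : Measurable H) (hT : Measurable T)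
    (hG : 𝓜.G q = kap K H) (hM : 𝓜.M (q + 1) = kcomp (twist K H) T)
    (hfin : ∀ᵐ x ∂(𝓜.gamma q), kap K H x ≠ ∞) :
    𝓜.gamma (q + 1) = (((𝓜.gamma q).bind K).withDensity H).bind T := by
  rw [FK.gamma, hG, hM]
  unfold kcomp
  rw [← Measure.bind_bind (measurable_twist hK hH).aemeasurable hT.aemeasurable,
    withDensity_kap_bind_twist _ hK hH hfin]

namespace Knotset

variable (𝓚 : Knotset E n) (𝓜 : FK E n)

lemma apply_G_of_lt {p : ℕ} (hp : p < n) : (𝓚.apply 𝓜).G p = kap (𝓚.K p) (𝓜.G p) := by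
  simp [apply, hp]

lemma apply_G_self : (𝓚.apply 𝓜).G n = 𝓜.G n := by
  simp [apply]

lemma apply_M_succ_of_lt {q : ℕ} (hq : q + 1 < n) :
    (𝓚.apply 𝓜).M (q + 1) = kcomp (twist (𝓚.K q) (𝓜.G q)) (𝓚.R (q + 1)) := by
  simp [apply, hq]

lemma apply_M_succ_of_eq {q : ℕ} (hq : q + 1 = n) :
    (𝓚.apply 𝓜).M (q + 1) = kcomp (twist (𝓚.K q) (𝓜.G q)) (𝓜.M (q + 1)) := by
  subst hq
  simp [apply]

variable {𝓚 𝓜}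

theorem bind_gamma_apply_and_ae_kap_ne_top (h𝓜 : 𝓜.Reg) (h𝓚 : 𝓚.Reg) (hc : 𝓚.Compat 𝓜) :
    ∀ p < n, ((𝓚.apply 𝓜).gamma p).bind (𝓚.K p) = 𝓜.gamma p ∧
      ∀ᵐ x ∂((𝓚.apply 𝓜).gamma p), kap (𝓚.K p) (𝓜.G p) x ≠ ∞ := by
  obtain ⟨-, -, hG, -, hG0, hMG⟩ := h𝓜
  obtain ⟨-, hR, hK⟩ := h𝓚
  intro p
  induction p with
  | zero =>
    intro hn
    have hbind : ((𝓚.apply 𝓜).gamma 0).bind (𝓚.K 0) = 𝓜.gamma 0 := hc.1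
    refine ⟨hbind, (ae_lt_top (measurable_kap (hK 0 hn).1 (hG 0 hn.le)) ?_).mono fun x hx => hx.ne⟩
    rwa [lintegral_kap _ (hK 0 hn).1 (hG 0 hn.le), hbind]
  | succ q ih =>
    intro hq
    obtain ⟨hbind, hfin⟩ := ih (by omega)
    have hRq := (hR (q + 1) (by omega) hq).1
    have hKq := (hK (q + 1) hq).1
    have hGq := hG (q + 1) hq.le
    have hcomp : kcomp (𝓚.R (q + 1)) (𝓚.K (q + 1)) = 𝓜.M (q + 1) := hc.2 (q + 1) (by omega) hq
    have hgamma : (𝓚.apply 𝓜).gamma (q + 1) = (𝓜.gammaHat q).bind (𝓚.R (q + 1)) := by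
      rw [FK.gamma_succ_of_twist _ (hK q (by omega)).1 (hG q (by omega)) hRq
        (apply_G_of_lt 𝓚 𝓜 (by omega)) (apply_M_succ_of_lt 𝓚 𝓜 hq) hfin, hbind, FK.gammaHat]
    refine ⟨?_, ?_⟩
    · rw [hgamma, Measure.bind_bind hRq.aemeasurable hKq.aemeasurable]
      exact congrArg (𝓜.gammaHat q).bind hcomp
    · rw [hgamma]
      refine ae_bind_of_forall_ae hRq.aemeasurable
        (measurable_kap hKq hGq (measurableSet_singleton ∞).compl) fun y => ?_
      refine (ae_lt_top (measurable_kap hKq hGq) ?_).mono fun x hx => hx.ne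
      rw [lintegral_kap _ hKq hGq, ← kcomp, hcomp]
      exact hMG (q + 1) y (by omega) hq.le

theorem gamma_apply_self (hn : 1 ≤ n) (h𝓜 : 𝓜.Reg) (h𝓚 : 𝓚.Reg) (hc : 𝓚.Compat 𝓜) :
    (𝓚.apply 𝓜).gamma n = 𝓜.gamma n := by
  obtain ⟨q, rfl⟩ : ∃ q, n = q + 1 := ⟨n - 1, by omega⟩
  obtain ⟨hbind, hfin⟩ := bind_gamma_apply_and_ae_kap_ne_top h𝓜 h𝓚 hc q (by omega)
  rw [FK.gamma_succ_of_twist _ (h𝓚.2.2 q (by omega)).1 (h𝓜.2.2.1 q (by omega))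
    (h𝓜.2.1 (q + 1) (by omega) le_rfl).1 (apply_G_of_lt 𝓚 𝓜 (by omega))
    (apply_M_succ_of_eq 𝓚 𝓜 rfl) hfin, hbind]
  rfl

theorem gammaHat_apply_self (hn : 1 ≤ n) (h𝓜 : 𝓜.Reg) (h𝓚 : 𝓚.Reg) (hc : 𝓚.Compat 𝓜) :
    (𝓚.apply 𝓜).gammaHat n = 𝓜.gammaHat n := by
  rw [FK.gammaHat, FK.gammaHat, gamma_apply_self hn h𝓜 h𝓚 hc, apply_G_self]

theorem gamma_apply_univ (hn : 1 ≤ n) (h𝓜 : 𝓜.Reg) (h𝓚 : 𝓚.Reg) (hc : 𝓚.Compat 𝓜)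
    {p : ℕ} (hp : p ≤ n) : (𝓚.apply 𝓜).gamma p Set.univ = 𝓜.gamma p Set.univ := by
  rcases hp.lt_or_eq with hp | rfl
  · have := (h𝓚.2.2 p hp).2
    rw [← (bind_gamma_apply_and_ae_kap_ne_top h𝓜 h𝓚 hc p hp).1,
      bind_apply_univ _ (h𝓚.2.2 p hp).1]
  · rw [gamma_apply_self hn h𝓜 h𝓚 hc]

theorem gammaHat_apply_univ (hn : 1 ≤ n) (h𝓜 : 𝓜.Reg) (h𝓚 : 𝓚.Reg) (hc : 𝓚.Compat 𝓜)
    {p : ℕ} (hp : p ≤ n) : (𝓚.apply 𝓜).gammaHat p Set.univ = 𝓜.gammaHat p Set.univ := by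
  rcases hp.lt_or_eq with hp | rfl
  · rw [FK.gammaHat_univ, FK.gammaHat_univ, apply_G_of_lt 𝓚 𝓜 hp,
      lintegral_kap _ (h𝓚.2.2 p hp).1 (h𝓜.2.2.1 p hp.le),
      (bind_gamma_apply_and_ae_kap_ne_top h𝓜 h𝓚 hc p hp).1]
  · rw [gammaHat_apply_self hn h𝓜 h𝓚 hc]

end Knotset

end KnotModel

/-- Proposition 3.3, knot-model invariants: for a knotset `K`
compatible with `M` and `M* = K ∗ M`, for every measurable `φ`:
(1) `γ*_n(φ) = γ_n(φ)` and `γ̂*_n(φ) = γ̂_n(φ)`;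
(2) `η*_n(φ) = η_n(φ)` and `η̂*_n(φ) = η̂_n(φ)`;
(3) `γ*_p(1) = γ_p(1)` and `γ̂*_p(1) = γ̂_p(1)` for all `p ∈ {0,…,n}`. -/
theorem statement2 {E : Type*} [MeasurableSpace E] {n : ℕ} (hn : 1 ≤ n)
    (𝓜 : FK E n) (𝓚 : Knotset E n)
    (h𝓜 : 𝓜.Reg) (h𝓚 : 𝓚.Reg) (hcompat : 𝓚.Compat 𝓜) :
    (∀ φ : E → ℝ≥0∞, Measurable φ →
      (∫⁻ x, φ x ∂((𝓚.apply 𝓜).gamma n) = ∫⁻ x, φ x ∂(𝓜.gamma n)) ∧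
      (∫⁻ x, φ x ∂((𝓚.apply 𝓜).gammaHat n) = ∫⁻ x, φ x ∂(𝓜.gammaHat n)) ∧
      (∫⁻ x, φ x ∂((𝓚.apply 𝓜).eta n) = ∫⁻ x, φ x ∂(𝓜.eta n)) ∧
      (∫⁻ x, φ x ∂((𝓚.apply 𝓜).etaHat n) = ∫⁻ x, φ x ∂(𝓜.etaHat n))) ∧
    (∀ p, p ≤ n →
      (𝓚.apply 𝓜).gamma p Set.univ = 𝓜.gamma p Set.univ ∧
      (𝓚.apply 𝓜).gammaHat p Set.univ = 𝓜.gammaHat p Set.univ) := by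
  have hgamma := Knotset.gamma_apply_self hn h𝓜 h𝓚 hcompat
  have hgammaHat := Knotset.gammaHat_apply_self hn h𝓜 h𝓚 hcompat
  refine ⟨fun φ _ => ?_, fun p hp => ⟨Knotset.gamma_apply_univ hn h𝓜 h𝓚 hcompat hp,
    Knotset.gammaHat_apply_univ hn h𝓜 h𝓚 hcompat hp⟩⟩
  simp only [FK.eta, FK.etaHat, hgamma, hgammaHat, and_self]

end KnotsPaper
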